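/- Let (A_k, B_k) and (A_ℓ, B_ℓ), k ≠ ℓ, be two pairs in a 1-cross intersecting system with |A_k| = |B_ℓ| = 2, say A_k = {x,y}, B_ℓ = {x,z} (with A_k ∩ B_ℓ = {x}). Then for every other index i in the system, (A_i, B_i) satisfies exactly one of: (1) x ∈ A_i, y ∈ B_i, z ∉ A_i; (2) x ∈ B_i, y ∉ B_i, z ∈ A_i; (3) x ∉ A_i ∪ B_i, y ∈ B_i, z ∈ A_i. -/
import Mathlib

lemma pair_inter_one' {α : Type*} [DecidableEq α] {x y : α} {S : Finset α}
    (hxy : x ≠ y) (h : (({x, y} : Finset α) ∩ S).card = 1) :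
    (x ∈ S ∧ y ∉ S) ∨ (x ∉ S ∧ y ∈ S) := by
  by_cases hx : x ∈ S <;> by_cases hy : y ∈ S
  · exfalso
    have heq : ({x, y} : Finset α) ∩ S = {x, y} :=
      Finset.inter_eq_left.2 (Finset.insert_subset hx (Finset.singleton_subset_iff.2 hy))
    rw [heq, Finset.card_pair hxy] at h
    omega
  · exact Or.inl ⟨hx, hy⟩
  · exact Or.inr ⟨hx, hy⟩
  · exfalso
    have heq : ({x, y} : Finset α) ∩ S = ∅ := by
      ext a
      simp only [Finset.mem_inter, Finset.mem_insert, Finset.mem_singleton,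
        Finset.notMem_empty, iff_false]
      rintro ⟨(rfl | rfl), ha⟩ <;> [exact hx ha; exact hy ha]
    rw [heq] at h
    simp at h

theorem stmt_19 {α : Type*} [DecidableEq α] {I : Type*}
    (A B : I → Finset α)
    (hdisj : ∀ i, A i ∩ B i = ∅)
    (hcross : ∀ i j, i ≠ j → (A i ∩ B j).card = 1)
    (k l : I) (hkl : k ≠ l) (x y z : α)
    (hxy : x ≠ y) (hxz : x ≠ z) (hyz : y ≠ z)
    (hAk : A k = {x, y}) (hBl : B l = {x, z}) :
    ∀ i, i ≠ k → i ≠ l →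
      ((x ∈ A i ∧ y ∈ B i ∧ z ∉ A i) ∧
        ¬(x ∈ B i ∧ y ∉ B i ∧ z ∈ A i) ∧ ¬(x ∉ A i ∪ B i ∧ y ∈ B i ∧ z ∈ A i)) ∨
      (¬(x ∈ A i ∧ y ∈ B i ∧ z ∉ A i) ∧
        (x ∈ B i ∧ y ∉ B i ∧ z ∈ A i) ∧ ¬(x ∉ A i ∪ B i ∧ y ∈ B i ∧ z ∈ A i)) ∨
      (¬(x ∈ A i ∧ y ∈ B i ∧ z ∉ A i) ∧
        ¬(x ∈ B i ∧ y ∉ B i ∧ z ∈ A i) ∧ (x ∉ A i ∪ B i ∧ y ∈ B i ∧ z ∈ A i)) := by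
  intro i hik hil
  have h1 : (({x, y} : Finset α) ∩ B i).card = 1 := by
    rw [← hAk]; exact hcross k i (Ne.symm hik)
  have h2 : (({x, z} : Finset α) ∩ A i).card = 1 := by
    rw [Finset.inter_comm, ← hBl]; exact hcross i l hil
  have hB := pair_inter_one' hxy h1
  have hA := pair_inter_one' hxz h2
  have hd : ∀ a : α, a ∈ A i → a ∈ B i → False := by
    intro a ha hb
    have : a ∈ A i ∩ B i := Finset.mem_inter.2 ⟨ha, hb⟩
    rw [hdisj i] at this
    exact Finset.notMem_empty a this
  simp only [Finset.mem_union]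
  rcases hA with ⟨hxA, hzA⟩ | ⟨hxA, hzA⟩
  · -- x ∈ A i, z ∉ A i : case 1
    have hxB : x ∉ B i := fun hb => hd x hxA hb
    have hyB : y ∈ B i := by
      rcases hB with ⟨h, _⟩ | ⟨_, h⟩
      · exact absurd h hxB
      · exact h
    exact Or.inl ⟨⟨hxA, hyB, hzA⟩, by tauto, by tauto⟩
  · rcases hB with ⟨hxB, hyB⟩ | ⟨hxB, hyB⟩
    · -- case 2
      exact Or.inr (Or.inl ⟨by tauto, ⟨hxB, hyB, hzA⟩, by tauto⟩)
    · -- case 3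
      exact Or.inr (Or.inr ⟨by tauto, by tauto, ⟨by tauto, hyB, hzA⟩⟩)
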